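/- arXiv:0902.1262 — 4 statements merged into one kernel-verified Lean document; each statement's English description precedes it below -/
import Mathlib

section
/- Let k ≥ 2, let s = (s_1,…,s_k) be positive integers, α ∈ ℝ, z ∈ ℂ with Re(z) ≥ 1, and let I be a nonempty subset of {1,…,k}. Then the limit as N → ∞ of ∫_0^1 (∏_{j∈I} f_{s_j,N}(x)) · (∏_{j∈{1,…,k}∖I} f^+_{s_j,N}(x)) · f^+_{z,N}(x+α) dx exists and equals Σ_{J ⊆ I} (−1)^{Σ_{j∈J} s_j} S(s, J, α). -/
open Complex

/-- `e(x) = exp(2πix)`. -/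
noncomputable def efn (x : ℝ) : ℂ := Complex.exp (2 * Real.pi * Complex.I * x)

/-- The partial sum `f⁺_{s,N}(x) = Σ_{m=1}^N e(mx)/m^s`. -/
noncomputable def fplus (s : ℂ) (N : ℕ) (x : ℝ) : ℂ :=
  ∑ m ∈ Finset.Icc 1 N, efn ((m : ℝ) * x) * (((m : ℕ) : ℂ) ^ s)⁻¹

/-- `f_{s,N}(x) = f⁺_{s,N}(x) + (−1)^s f⁺_{s,N}(−x)` for a positive integer `s`. -/
noncomputable def ffull (s : ℕ) (N : ℕ) (x : ℝ) : ℂ :=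
  fplus (s : ℂ) N x + (-1 : ℂ) ^ s * fplus (s : ℂ) N (-x)

/-- `S(s,J,α)`: the sum of `e(m_{k+1}α)/(m₁^{s₁}⋯m_k^{s_k} m_{k+1}^z)` over all tuples
of positive integers `(m₁,…,m_{k+1})` with `Σ_{j∈J} m_j = Σ_{j∉J} m_j` (the complement
taken inside `{1,…,k+1}`). -/
noncomputable def Sval {k : ℕ} (s : Fin k → ℕ) (z : ℂ) (α : ℝ) (J : Finset (Fin k)) : ℂ :=
  ∑' m : {m : Fin (k + 1) → ℕ+ //
      ∑ j ∈ J, (m j.castSucc : ℕ) = (∑ j ∈ Jᶜ, (m j.castSucc : ℕ)) + (m (Fin.last k) : ℕ)},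
    efn (((m.1 (Fin.last k) : ℕ) : ℝ) * α) *
      (∏ j : Fin k, ((m.1 j.castSucc : ℕ) : ℂ) ^ s j)⁻¹ *
        (((m.1 (Fin.last k) : ℕ) : ℂ) ^ z)⁻¹

/-!
Expanding the products turns the integrand into a trigonometric polynomial: taking `f⁺(-x)`
in the factors indexed by `J ⊆ I` produces the terms `e(L x)` times a term of `S(s, J, α)`,
where `L = Σ_{j ∉ J} m_j + m_{k+1} - Σ_{j ∈ J} m_j`, and integrating over `[0, 1]` keeps
exactly the terms with `L = 0`. So the `N`-th integral is `Σ_J (-1)^{Σ_J s_j}` times the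
partial sum of `S(s, J, α)` over the box `[1, N]^{k+1}`, and these converge because the
series converges absolutely. Its terms are bounded by `∏ 1 / m_i`; at a largest coordinate
`m_p` one has `1 / m_p ≤ ∏_{i ≠ p} m_i^{-1/(k+1)}`, and on the hyperplane `L = 0` each
coordinate is determined by the others, so `Σ ∏_{i ≠ p} m_i^{-1-1/(k+1)}` converges there.
-/

lemma efn_add (x y : ℝ) : efn (x + y) = efn x * efn y := by
  simp only [efn, ← Complex.exp_add]; push_cast; ring_nf

lemma efn_sum {ι : Type*} (t : Finset ι) (g : ι → ℝ) :
    efn (∑ i ∈ t, g i) = ∏ i ∈ t, efn (g i) := by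
  simp only [efn, ← Complex.exp_sum]; push_cast; rw [Finset.mul_sum]

lemma norm_efn (x : ℝ) : ‖efn x‖ = 1 := by
  rw [efn, show 2 * Real.pi * Complex.I * x = ((2 * Real.pi * x : ℝ) : ℂ) * Complex.I by
    push_cast; ring]
  exact Complex.norm_exp_ofReal_mul_I _

@[fun_prop]
lemma continuous_efn : Continuous efn := by
  unfold efn; fun_prop

lemma integral_efn_intCast_mul (n : ℤ) :
    ∫ x in (0 : ℝ)..1, efn (n * x) = if n = 0 then 1 else 0 := by
  split_ifs with hn
  · simp [hn, efn]
  have hc : 2 * Real.pi * Complex.I * n ≠ 0 := by simp [Real.pi_ne_zero, hn]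
  have h : ∀ x : ℝ, efn (n * x) = Complex.exp (2 * Real.pi * Complex.I * n * x) := fun x => by
    unfold efn; push_cast; ring_nf
  simp only [h, integral_exp_mul_complex hc, Complex.ofReal_one, Complex.ofReal_zero, mul_one,
    mul_zero, Complex.exp_zero]
  rw [show 2 * Real.pi * Complex.I * n = n * (2 * Real.pi * Complex.I) by ring,
    Complex.exp_int_mul_two_pi_mul_I, sub_self, zero_div]

lemma integral_sum_efn_mul {ι : Type*} (t : Finset ι) (L : ι → ℤ) (c : ι → ℂ) :
    ∫ x in (0 : ℝ)..1, ∑ i ∈ t, efn (L i * x) * c i = ∑ i ∈ t with L i = 0, c i := by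
  rw [intervalIntegral.integral_finsetSum fun i _ => by
    apply Continuous.intervalIntegrable; fun_prop, Finset.sum_filter]
  refine Finset.sum_congr rfl fun i _ => ?_
  rw [intervalIntegral.integral_mul_const, integral_efn_intCast_mul]
  split_ifs <;> simp

lemma prod_add_mul_prod_compl {ι R : Type*} [Fintype ι] [DecidableEq ι] [CommSemiring R]
    (I : Finset ι) (u v c : ι → R) :
    (∏ j ∈ I, (u j + c j * v j)) * ∏ j ∈ Iᶜ, u j =
      ∑ J ∈ I.powerset, (∏ j ∈ J, c j) * ∏ j, if j ∈ J then v j else u j := by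
  simp_rw [add_comm (u _), Finset.prod_add, Finset.sum_mul]
  refine Finset.sum_congr rfl fun J hJ => ?_
  have hcompl : (I \ J) ∪ Iᶜ = Jᶜ := by
    ext j
    have : j ∈ J → j ∈ I := fun h => Finset.mem_powerset.mp hJ h
    simp only [Finset.mem_union, Finset.mem_sdiff, Finset.mem_compl]
    tauto
  have hdisj : Disjoint (I \ J) Iᶜ := disjoint_compl_right.mono_left Finset.sdiff_subset
  rw [Finset.prod_ite, Finset.prod_mul_distrib, mul_assoc, mul_assoc, ← Finset.prod_union hdisj,
    hcompl, Finset.filter_mem_eq_inter, Finset.univ_inter, Finset.filter_not,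
    Finset.filter_mem_eq_inter, Finset.univ_inter, Finset.compl_eq_univ_sdiff]

lemma prod_sum_mul_sum_eq_sum_piFinset {β R : Type*} [CommSemiring R] {n : ℕ}
    (t : Finset β) (a : Fin n → β → R) (b : β → R) :
    (∏ j, ∑ y ∈ t, a j y) * ∑ y ∈ t, b y =
      ∑ m ∈ Fintype.piFinset fun _ : Fin (n + 1) => t,
        (∏ j, a j (m j.castSucc)) * b (m (Fin.last n)) := by
  simpa [Fin.prod_univ_castSucc] using
    Finset.prod_univ_sum (fun _ : Fin (n + 1) => t) (Fin.snoc (α := fun _ => β → R) a b)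

lemma HasSum.tendsto_sum_filter {α E : Type*} [AddCommMonoid E] [TopologicalSpace E]
    {p : α → Prop} [DecidablePred p] {f : α → E} {a : E} (hf : HasSum (fun m : Subtype p => f m) a)
    {B : ℕ → Finset α} (hB : Monotone B) (hcover : ∀ m, ∃ N, m ∈ B N) :
    Filter.Tendsto (fun N => ∑ m ∈ B N with p m, f m) Filter.atTop (nhds a) := by
  have hsub := Filter.tendsto_atTop_finset_of_monotone (f := fun N => (B N).subtype p)
    (fun _ _ h => Finset.subtype_mono (hB h))
    fun m => (hcover m).imp fun _ => Finset.mem_subtype.mpr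
  simpa [Function.comp_def, Finset.sum_subtype_eq_sum_filter] using hf.comp hsub

lemma summable_prod_of_summable {κ β : Type*} [Fintype κ] {g : β → ℝ} (hg0 : ∀ b, 0 ≤ g b)
    (hg : Summable g) : Summable fun v : κ → β => ∏ i, g (v i) := by
  classical
  refine summable_of_sum_le (c := (∑' b, g b) ^ Fintype.card κ)
    (fun v => Finset.prod_nonneg fun i _ => hg0 _) fun F => ?_
  calc ∑ v ∈ F, ∏ i, g (v i)
      ≤ ∑ v ∈ Fintype.piFinset fun i => F.image (· i), ∏ i, g (v i) :=
        Finset.sum_le_sum_of_subset_of_nonneg (fun v hv => Fintype.mem_piFinset.mpr fun i =>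
          Finset.mem_image_of_mem _ hv) fun v _ _ => Finset.prod_nonneg fun i _ => hg0 _
    _ = ∏ i, ∑ b ∈ F.image (· i), g b := (Finset.prod_univ_sum _ _).symm
    _ ≤ ∏ _i : κ, ∑' b, g b :=
        Finset.prod_le_prod (fun i _ => Finset.sum_nonneg fun b _ => hg0 b)
          fun i _ => hg.sum_le_tsum _ fun b _ => hg0 b
    _ = (∑' b, g b) ^ Fintype.card κ := by rw [Finset.prod_const, Finset.card_univ]

lemma prod_inv_le_prod_succAbove_rpow {n : ℕ} (x : Fin (n + 1) → ℝ) (hx : ∀ i, 1 ≤ x i)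
    (p : Fin (n + 1)) (hp : ∀ i, x i ≤ x p) :
    ∏ i, (x i)⁻¹ ≤ ∏ j, x (p.succAbove j) ^ (-(1 + 1 / (n + 1)) : ℝ) := by
  set r : ℝ := 1 / (n + 1)
  have hpos : ∀ i, 0 < x i := fun i => one_pos.trans_le (hx i)
  have hr : 0 ≤ r := by positivity
  have hmax : ∏ j, x (p.succAbove j) ^ r ≤ x p :=
    calc ∏ j, x (p.succAbove j) ^ r
        ≤ ∏ _j : Fin n, x p ^ r := Finset.prod_le_prod (fun j _ => Real.rpow_nonneg (hpos _).le r)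
          fun j _ => Real.rpow_le_rpow (hpos _).le (hp _) hr
      _ = x p ^ (r * n) := by
        rw [Finset.prod_const, Finset.card_univ, Fintype.card_fin,
          Real.rpow_mul_natCast (hpos p).le]
      _ ≤ x p ^ (1 : ℝ) := Real.rpow_le_rpow_of_exponent_le (hx p) (by
        rw [div_mul_eq_mul_div, one_mul, div_le_one (by positivity)]; linarith)
      _ = x p := Real.rpow_one _
  calc ∏ i, (x i)⁻¹ = (x p)⁻¹ * ∏ j, (x (p.succAbove j))⁻¹ := Fin.prod_univ_succAbove _ p
    _ ≤ (∏ j, x (p.succAbove j) ^ r)⁻¹ * ∏ j, (x (p.succAbove j))⁻¹ :=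
        mul_le_mul_of_nonneg_right
          (inv_anti₀ (Finset.prod_pos fun j _ => Real.rpow_pos_of_pos (hpos _) r) hmax)
          (Finset.prod_nonneg fun j _ => (inv_pos.mpr (hpos _)).le)
    _ = ∏ j, x (p.succAbove j) ^ (-(1 + r)) := by
        rw [← Finset.prod_inv_distrib, ← Finset.prod_mul_distrib]
        refine Finset.prod_congr rfl fun j _ => ?_
        rw [neg_add, Real.rpow_add (hpos _), Real.rpow_neg_one, Real.rpow_neg (hpos _).le, mul_comm]

lemma summable_prod_inv_of_injOn_removeNth {n : ℕ} (S : Set (Fin (n + 1) → ℕ+))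
    (hS : ∀ p : Fin (n + 1), S.InjOn p.removeNth) :
    Summable fun m : S => ∏ i, ((m.1 i : ℕ) : ℝ)⁻¹ := by
  set q : ℝ := 1 + 1 / (n + 1)
  have hq : 1 < q := by simp only [q]; linarith [show (0 : ℝ) < 1 / (n + 1) by positivity]
  have hpow : Summable fun v : Fin n → ℕ+ => ∏ j, ((v j : ℕ) : ℝ) ^ (-q) :=
    summable_prod_of_summable (g := fun n : ℕ+ => ((n : ℕ) : ℝ) ^ (-q))
      (fun _ => Real.rpow_nonneg (Nat.cast_nonneg _) _)
      ((Real.summable_nat_rpow.mpr (by linarith)).comp_injective PNat.coe_injective)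
  have hmaj :
      Summable fun m : S => ∑ p : Fin (n + 1), ∏ j, ((m.1 (p.succAbove j) : ℕ) : ℝ) ^ (-q) :=
    summable_sum fun p _ => hpow.comp_injective (Set.injOn_iff_injective.mp (hS p))
  refine Summable.of_nonneg_of_le (fun m => by positivity) (fun m => ?_) hmaj
  obtain ⟨p, -, hp⟩ :=
    Finset.exists_max_image Finset.univ (fun i => ((m.1 i : ℕ) : ℝ)) Finset.univ_nonempty
  calc ∏ i, ((m.1 i : ℕ) : ℝ)⁻¹ ≤ ∏ j, ((m.1 (p.succAbove j) : ℕ) : ℝ) ^ (-q) :=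
        prod_inv_le_prod_succAbove_rpow _ (fun i => Nat.one_le_cast.mpr (m.1 i).pos) p
          fun i => hp i (Finset.mem_univ i)
    _ ≤ ∑ p' : Fin (n + 1), ∏ j, ((m.1 (p'.succAbove j) : ℕ) : ℝ) ^ (-q) :=
        Finset.single_le_sum
          (f := fun p' : Fin (n + 1) => ∏ j, ((m.1 (p'.succAbove j) : ℕ) : ℝ) ^ (-q))
          (fun _ _ => Finset.prod_nonneg fun _ _ => Real.rpow_nonneg (Nat.cast_nonneg _) _)
          (Finset.mem_univ p)

lemma Fin.eq_of_removeNth_eq_of_sum_mul_eq {n : ℕ} {w x y : Fin (n + 1) → ℤ} {p : Fin (n + 1)}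
    (hp : w p ≠ 0) (hsum : ∑ i, w i * x i = ∑ i, w i * y i) (h : p.removeNth x = p.removeNth y) :
    x = y := by
  have hrest : ∀ j, x (p.succAbove j) = y (p.succAbove j) := congrFun h
  simp only [Fin.sum_univ_succAbove _ p, hrest, add_left_inj, mul_right_inj' hp] at hsum
  funext i
  exact Fin.succAboveCases (α := fun i => x i = y i) p hsum hrest i

noncomputable def pnatIcc (N : ℕ) : Finset ℕ+ :=
  (Finset.Icc 1 N).preimage ((↑) : ℕ+ → ℕ) PNat.coe_injective.injOn

lemma mem_pnatIcc {N : ℕ} {n : ℕ+} : n ∈ pnatIcc N ↔ (n : ℕ) ≤ N := by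
  simp only [pnatIcc, Finset.mem_preimage, Finset.mem_Icc]
  exact and_iff_right n.pos

lemma pnatIcc_mono : Monotone pnatIcc := fun _ _ h _ hn =>
  mem_pnatIcc.mpr ((mem_pnatIcc.mp hn).trans h)

lemma fplus_eq_sum_pnatIcc (s : ℂ) (N : ℕ) (x : ℝ) :
    fplus s N x = ∑ n ∈ pnatIcc N, efn ((n : ℕ) * x) * (((n : ℕ) : ℂ) ^ s)⁻¹ := by
  refine (Finset.sum_preimage _ _ _ _ fun n hn hrange => ?_).symm
  exact absurd ⟨⟨n, (Finset.mem_Icc.mp hn).1⟩, rfl⟩ hrange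

@[fun_prop]
lemma continuous_fplus (s : ℂ) (N : ℕ) : Continuous (fplus s N) := by
  unfold fplus; fun_prop

section

variable {k : ℕ}

def signOn (J : Finset (Fin k)) (j : Fin k) : ℤ := if j ∈ J then -1 else 1

lemma signOn_ne_zero (J : Finset (Fin k)) (j : Fin k) : signOn J j ≠ 0 := by
  unfold signOn; split_ifs <;> decide

def frequency (ε : Fin k → ℤ) (m : Fin (k + 1) → ℕ+) : ℤ :=
  ∑ j, ε j * (m j.castSucc : ℕ) + (m (Fin.last k) : ℕ)

lemma frequency_signOn_eq_zero_iff (J : Finset (Fin k)) (m : Fin (k + 1) → ℕ+) :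
    frequency (signOn J) m = 0 ↔
      ∑ j ∈ J, (m j.castSucc : ℕ) = ∑ j ∈ Jᶜ, (m j.castSucc : ℕ) + (m (Fin.last k) : ℕ) := by
  simp only [frequency, signOn, ite_mul, neg_one_mul, one_mul, Finset.sum_ite,
    Finset.filter_mem_eq_inter, Finset.univ_inter, Finset.filter_not, Finset.sum_neg_distrib,
    ← Finset.compl_eq_univ_sdiff]
  rw [← Nat.cast_sum, ← Nat.cast_sum]
  omega

lemma injOn_removeNth_frequency_eq_zero {ε : Fin k → ℤ} (hε : ∀ j, ε j ≠ 0) (p : Fin (k + 1)) :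
    {m | frequency ε m = 0}.InjOn p.removeNth := by
  intro m hm m' hm' h
  have hw : ∀ m : Fin (k + 1) → ℕ+, frequency ε m =
      ∑ i, Fin.snoc (α := fun _ => ℤ) ε 1 i * (m i : ℕ) := fun m => by
    simp [frequency, Fin.sum_univ_castSucc]
  have hcast := Fin.eq_of_removeNth_eq_of_sum_mul_eq (w := Fin.snoc (α := fun _ => ℤ) ε 1)
    (x := fun i => (m i : ℕ)) (y := fun i => (m' i : ℕ)) (p := p) ?_ ?_ ?_
  · funext i; exact PNat.coe_injective (by exact_mod_cast congrFun hcast i)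
  · cases p using Fin.lastCases <;> simp [hε]
  · rw [← hw, ← hw, hm.out, hm'.out]
  · funext j; exact congrArg (fun n : ℕ+ => ((n : ℕ) : ℤ)) (congrFun h j)

end

lemma norm_inv_natCast_cpow_le {n : ℕ} (hn : 0 < n) {w : ℂ} (hw : 1 ≤ w.re) :
    ‖((n : ℂ) ^ w)⁻¹‖ ≤ (n : ℝ)⁻¹ := by
  rw [norm_inv, Complex.norm_natCast_cpow_of_pos hn]
  refine inv_anti₀ (Nat.cast_pos.mpr hn) ?_
  simpa using Real.rpow_le_rpow_of_exponent_le (Nat.one_le_cast.mpr hn) hw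

section

variable {k : ℕ} (s : Fin k → ℕ) (z : ℂ) (α : ℝ)

noncomputable def svalTerm (m : Fin (k + 1) → ℕ+) : ℂ :=
  efn (((m (Fin.last k) : ℕ) : ℝ) * α) *
    (∏ j : Fin k, ((m j.castSucc : ℕ) : ℂ) ^ s j)⁻¹ * (((m (Fin.last k) : ℕ) : ℂ) ^ z)⁻¹

lemma Sval_eq_tsum_svalTerm (J : Finset (Fin k)) :
    Sval s z α J = ∑' m : {m // frequency (signOn J) m = 0}, svalTerm s z α m :=
  ((Equiv.subtypeEquivRight fun m => frequency_signOn_eq_zero_iff J m).tsum_eq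
    fun m => svalTerm s z α m.1).symm

variable {s z}

lemma norm_svalTerm_le (hs : ∀ j, 1 ≤ s j) (hz : 1 ≤ z.re) (m : Fin (k + 1) → ℕ+) :
    ‖svalTerm s z α m‖ ≤ ∏ i, ((m i : ℕ) : ℝ)⁻¹ := by
  rw [svalTerm, norm_mul, norm_mul, norm_efn, one_mul, ← Finset.prod_inv_distrib, norm_prod,
    Fin.prod_univ_castSucc]
  refine mul_le_mul (Finset.prod_le_prod (fun _ _ => norm_nonneg _) fun j _ => ?_)
    (norm_inv_natCast_cpow_le (m _).pos hz) (norm_nonneg _)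
    (Finset.prod_nonneg fun _ _ => inv_nonneg.mpr (Nat.cast_nonneg _))
  rw [← Complex.cpow_natCast]
  exact norm_inv_natCast_cpow_le (m _).pos (by simpa using hs j)

lemma summable_svalTerm (hs : ∀ j, 1 ≤ s j) (hz : 1 ≤ z.re) {ε : Fin k → ℤ} (hε : ∀ j, ε j ≠ 0) :
    Summable fun m : {m // frequency ε m = 0} => svalTerm s z α m :=
  (summable_prod_inv_of_injOn_removeNth _ (injOn_removeNth_frequency_eq_zero hε)).of_norm_bounded
    fun m => norm_svalTerm_le α hs hz m.1

lemma tendsto_sum_svalTerm (hs : ∀ j, 1 ≤ s j) (hz : 1 ≤ z.re) {ε : Fin k → ℤ}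
    (hε : ∀ j, ε j ≠ 0) :
    Filter.Tendsto
      (fun N => ∑ m ∈ Fintype.piFinset (fun _ => pnatIcc N) with frequency ε m = 0,
        svalTerm s z α m)
      Filter.atTop (nhds (∑' m : {m // frequency ε m = 0}, svalTerm s z α m)) := by
  refine (summable_svalTerm α hs hz hε).hasSum.tendsto_sum_filter
    (fun _ _ h => Fintype.piFinset_subset _ _ fun _ => pnatIcc_mono h) fun m => ?_
  exact ⟨Finset.univ.sup fun i => (m i : ℕ), Fintype.mem_piFinset.mpr fun i =>
    mem_pnatIcc.mpr (Finset.le_sup (f := fun i => (m i : ℕ)) (Finset.mem_univ i))⟩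

variable (s z)

lemma prod_fplus_mul_fplus_eq_sum (ε : Fin k → ℤ) (N : ℕ) (x : ℝ) :
    (∏ j, fplus (s j) N (ε j * x)) * fplus z N (x + α) =
      ∑ m ∈ Fintype.piFinset (fun _ => pnatIcc N), efn (frequency ε m * x) * svalTerm s z α m := by
  simp only [fplus_eq_sum_pnatIcc]
  rw [prod_sum_mul_sum_eq_sum_piFinset]
  refine Finset.sum_congr rfl fun m _ => ?_
  simp only [frequency, svalTerm, Complex.cpow_natCast, Int.cast_add, Int.cast_sum, Int.cast_mul,
    Int.cast_natCast, add_mul, Finset.sum_mul, efn_add, efn_sum, Finset.prod_mul_distrib,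
    Finset.prod_inv_distrib, mul_add]
  have hfreq : ∀ j, efn (((m j.castSucc : ℕ) : ℝ) * (ε j * x)) =
      efn (ε j * ((m j.castSucc : ℕ) : ℝ) * x) := fun j => by ring_nf
  simp only [hfreq]
  ring

lemma integral_prod_fplus_mul_fplus (ε : Fin k → ℤ) (N : ℕ) :
    ∫ x in (0 : ℝ)..1, (∏ j, fplus (s j) N (ε j * x)) * fplus z N (x + α) =
      ∑ m ∈ Fintype.piFinset (fun _ => pnatIcc N) with frequency ε m = 0, svalTerm s z α m := by
  simp only [prod_fplus_mul_fplus_eq_sum]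
  exact integral_sum_efn_mul _ _ _

lemma prod_ffull_mul_fplus_eq_sum (I : Finset (Fin k)) (N : ℕ) (x : ℝ) :
    (∏ j ∈ I, ffull (s j) N x) * (∏ j ∈ Iᶜ, fplus (s j) N x) * fplus z N (x + α) =
      ∑ J ∈ I.powerset, (-1 : ℂ) ^ (∑ j ∈ J, s j) *
        ((∏ j, fplus (s j) N (signOn J j * x)) * fplus z N (x + α)) := by
  simp only [ffull]
  rw [prod_add_mul_prod_compl, Finset.sum_mul]
  refine Finset.sum_congr rfl fun J _ => ?_
  rw [Finset.prod_pow_eq_pow_sum, mul_assoc]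
  congr 3
  ext j
  unfold signOn
  split_ifs <;> simp

lemma integral_prod_ffull_mul_fplus (I : Finset (Fin k)) (N : ℕ) :
    ∫ x in (0 : ℝ)..1, (∏ j ∈ I, ffull (s j) N x) * (∏ j ∈ Iᶜ, fplus (s j) N x) *
        fplus z N (x + α) =
      ∑ J ∈ I.powerset, (-1 : ℂ) ^ (∑ j ∈ J, s j) *
        ∑ m ∈ Fintype.piFinset (fun _ => pnatIcc N) with frequency (signOn J) m = 0,
          svalTerm s z α m := by
  simp only [prod_ffull_mul_fplus_eq_sum]
  rw [intervalIntegral.integral_finsetSum fun J _ => by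
    apply Continuous.intervalIntegrable; fun_prop]
  simp only [intervalIntegral.integral_const_mul, integral_prod_fplus_mul_fplus]

end

theorem stmt10_general (k : ℕ) (s : Fin k → ℕ) (hs : ∀ j, 1 ≤ s j) (α : ℝ)
    (z : ℂ) (hz : 1 ≤ z.re) (I : Finset (Fin k)) :
    Filter.Tendsto
      (fun N : ℕ => ∫ x in (0 : ℝ)..1,
        (∏ j ∈ I, ffull (s j) N x) * (∏ j ∈ Iᶜ, fplus ((s j : ℕ) : ℂ) N x) *
          fplus z N (x + α))
      Filter.atTop
      (nhds (∑ J ∈ I.powerset, (-1 : ℂ) ^ (∑ j ∈ J, s j) * Sval s z α J)) := by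
  simp only [integral_prod_ffull_mul_fplus, Sval_eq_tsum_svalTerm]
  exact tendsto_finsetSum _ fun J _ =>
    (tendsto_sum_svalTerm α hs hz (signOn_ne_zero J)).const_mul _

theorem stmt10 (k : ℕ) (hk : 2 ≤ k) (s : Fin k → ℕ) (hs : ∀ j, 1 ≤ s j) (α : ℝ)
    (z : ℂ) (hz : 1 ≤ z.re) (I : Finset (Fin k)) (hI : I.Nonempty) :
    Filter.Tendsto
      (fun N : ℕ => ∫ x in (0 : ℝ)..1,
        (∏ j ∈ I, ffull (s j) N x) * (∏ j ∈ Iᶜ, fplus ((s j : ℕ) : ℂ) N x) *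
          fplus z N (x + α))
      Filter.atTop
      (nhds (∑ J ∈ I.powerset, (-1 : ℂ) ^ (∑ j ∈ J, s j) * Sval s z α J)) :=
  stmt10_general k s hs α z hz I
end

section
/- Let k ≥ 2, let s = (s_1,…,s_k) be positive integers, α ∈ ℝ, and z ∈ ℂ with Re(z) ≥ 1. Then (−1)^{k+s_1+⋯+s_k} ζ_MT(s_1,…,s_k,z; 0,…,0,α) + Σ_{j=1}^k (−1)^{s_j} S(s, {j}, α) = Σ_{I ⊆ {1,…,k}, |I| ≥ 2} (−1)^{|I|} Σ_{J ⊆ I} (−1)^{Σ_{j∈J} s_j} S(s, J, α). (Here S(s,{j},α) coincides with the colored Mordell–Tornheim value in which the j-th entry of (s_1,…,s_k) is replaced by z with color α, s_j is appended as the last argument, and all other colors are 0; and ζ_MT(s_1,…,s_k,z;0,…,0,α) = S(s,{1,…,k},α).) -/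
/-!
Once ζ_MT(s, z; 0, …, 0, α) is recognised as S(s, {1, …, k}, α) (the constraint of the latter
says that m_{k+1} is the sum of the other indices), the identity is purely combinatorial.
For any f on the subsets of U, Möbius inversion on the Boolean lattice gives
Σ_{I ⊆ U} (-1)^|I| Σ_{J ⊆ I} f(J) = (-1)^|U| f(U). When f(∅) = 0 the terms with |I| ≤ 1
contribute -Σ_j f({j}); and f(J) = (-1)^{Σ_{j ∈ J} s_j} S(s, J, α) vanishes at ∅, since
0 = m_1 + ⋯ + m_{k+1} has no solution in positive integers.
-/

open Complex

/-- The colored Mordell–Tornheim value `ζ_MT(s₁,…,s_k,t; α₁,…,α_{k+1})`. -/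
noncomputable def MTC {k : ℕ} (s : Fin k → ℂ) (t : ℂ) (α : Fin (k + 1) → ℝ) : ℂ :=
  ∑' m : Fin k → ℕ+,
    (∏ j : Fin k, efn (((m j : ℕ) : ℝ) * α j.castSucc) * (((m j : ℕ) : ℂ) ^ s j)⁻¹) *
      (efn (((∑ j : Fin k, (m j : ℕ) : ℕ) : ℝ) * α (Fin.last k)) *
        ((∑ j : Fin k, ((m j : ℕ) : ℂ)) ^ t)⁻¹)

open Finset

theorem sum_powerset_neg_one_pow_card_mul_sum_powerset {α R : Type*} [DecidableEq α]
    [CommRing R] (U : Finset α) (f : Finset α → R) :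
    ∑ I ∈ U.powerset, (-1 : R) ^ #I * ∑ J ∈ I.powerset, f J = (-1) ^ #U * f U := by
  induction U using Finset.induction_on generalizing f with
  | empty => simp
  | insert a U ha ih =>
    have hinsert : ∀ I ∈ U.powerset,
        (-1 : R) ^ #(insert a I) * ∑ J ∈ (insert a I).powerset, f J =
          -((-1) ^ #I * ∑ J ∈ I.powerset, f J) -
            (-1) ^ #I * ∑ J ∈ I.powerset, f (insert a J) := by
      intro I hI
      have haI : a ∉ I := fun h => ha (mem_powerset.1 hI h)
      rw [card_insert_of_notMem haI, sum_powerset_insert haI]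
      ring
    rw [sum_powerset_insert ha, sum_congr rfl hinsert, sum_sub_distrib, sum_neg_distrib,
      ih (fun J => f (insert a J)), card_insert_of_notMem ha]
    ring

theorem sum_two_le_card_neg_one_pow_card_mul_sum_powerset {ι R : Type*} [Fintype ι]
    [DecidableEq ι] [CommRing R] (f : Finset ι → R) (hf : f ∅ = 0) :
    ∑ I ∈ univ.filter (fun I : Finset ι => 2 ≤ #I), (-1 : R) ^ #I * ∑ J ∈ I.powerset, f J
      = (-1) ^ Fintype.card ι * f univ + ∑ i, f {i} := by
  have hsmall : univ.filter (fun I : Finset ι => ¬ 2 ≤ #I) =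
      cons ∅ (univ.map ⟨singleton, singleton_injective⟩) (by simp) := by
    ext I
    simp only [mem_filter, mem_univ, true_and, mem_cons, mem_map, Function.Embedding.coeFn_mk]
    constructor
    · intro h
      rcases (by omega : #I = 0 ∨ #I = 1) with h | h
      · exact Or.inl (card_eq_zero.1 h)
      · obtain ⟨i, rfl⟩ := card_eq_one.1 h
        exact Or.inr ⟨i, rfl⟩
    · rintro (rfl | ⟨i, rfl⟩) <;> simp
  have hinversion := sum_powerset_neg_one_pow_card_mul_sum_powerset (univ : Finset ι) f
  rw [powerset_univ, ← sum_filter_add_sum_filter_not _ (fun I : Finset ι => 2 ≤ #I), hsmall,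
    sum_cons, sum_map] at hinversion
  have hsingleton : ∀ i : ι, ∑ J ∈ ({i} : Finset ι).powerset, f J = f {i} := fun i => by
    rw [← insert_empty, sum_powerset_insert (notMem_empty i)]
    simp [hf]
  simp only [card_empty, pow_zero, powerset_empty, sum_singleton, hf, mul_zero,
    Function.Embedding.coeFn_mk, card_singleton, pow_one, hsingleton, neg_mul, one_mul,
    sum_neg_distrib, zero_add, card_univ] at hinversion
  linear_combination hinversion

def snocSumEquiv (k : ℕ) [NeZero k] :
    (Fin k → ℕ+) ≃
      {m : Fin (k + 1) → ℕ+ // ∑ j : Fin k, (m j.castSucc : ℕ) = m (Fin.last k)} where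
  toFun m := ⟨Fin.snoc (α := fun _ => ℕ+) m
      ((∑ j, (m j : ℕ)).toPNat (sum_pos (fun j _ => (m j).pos) univ_nonempty)),
    by simp only [Fin.snoc_castSucc, Fin.snoc_last]; rfl⟩
  invFun m j := m.1 j.castSucc
  left_inv m := by simp
  right_inv m := by
    ext i
    refine Fin.lastCases ?_ (fun j => ?_) i
    · exact PNat.eq (by simp only [Fin.snoc_last]; exact m.2)
    · simp

@[simp]
theorem snocSumEquiv_apply_castSucc {k : ℕ} [NeZero k] (m : Fin k → ℕ+) (j : Fin k) :
    (snocSumEquiv k m).1 j.castSucc = m j := by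
  simp [snocSumEquiv]

@[simp]
theorem coe_snocSumEquiv_apply_last {k : ℕ} [NeZero k] (m : Fin k → ℕ+) :
    ((snocSumEquiv k m).1 (Fin.last k) : ℕ) = ∑ j, (m j : ℕ) := by
  simp only [snocSumEquiv, Equiv.coe_fn_mk, Fin.snoc_last]; rfl

theorem efn_zero : efn 0 = 1 := by simp [efn]

theorem MTC_eq_Sval_univ {k : ℕ} [NeZero k] (s : Fin k → ℕ) (z : ℂ) (α : ℝ) :
    MTC (fun j => (s j : ℂ)) z (fun i => if i = Fin.last k then α else 0)
      = Sval s z α univ := by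
  let e : (Fin k → ℕ+) ≃ {m : Fin (k + 1) → ℕ+ //
      ∑ j ∈ (univ : Finset (Fin k)), (m j.castSucc : ℕ) =
        (∑ j ∈ (univ : Finset (Fin k))ᶜ, (m j.castSucc : ℕ)) + (m (Fin.last k) : ℕ)} :=
    (snocSumEquiv k).trans (Equiv.subtypeEquivRight fun m => by simp)
  rw [MTC, Sval, ← e.tsum_eq]
  refine tsum_congr fun m => ?_
  simp only [e, Equiv.trans_apply, Equiv.subtypeEquivRight_apply_coe, snocSumEquiv_apply_castSucc,
    coe_snocSumEquiv_apply_last, (Fin.castSucc_lt_last _).ne, ↓reduceIte, mul_zero, efn_zero,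
    one_mul, cpow_natCast, prod_inv_distrib, Nat.cast_sum]
  ring

theorem Sval_empty {k : ℕ} (s : Fin k → ℕ) (z : ℂ) (α : ℝ) : Sval s z α ∅ = 0 := by
  have : IsEmpty {m : Fin (k + 1) → ℕ+ //
      ∑ j ∈ (∅ : Finset (Fin k)), (m j.castSucc : ℕ) =
        (∑ j ∈ (∅ : Finset (Fin k))ᶜ, (m j.castSucc : ℕ)) + (m (Fin.last k) : ℕ)} := by
    refine ⟨fun ⟨m, hm⟩ => (m (Fin.last k)).ne_zero ?_⟩
    rw [sum_empty] at hm
    omega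
  exact tsum_empty

theorem stmt12_general (k : ℕ) (hk : 2 ≤ k) (s : Fin k → ℕ) (α : ℝ)
    (z : ℂ) :
    (-1 : ℂ) ^ (k + ∑ j, s j) *
        MTC (fun j => (s j : ℂ)) z (fun i => if i = Fin.last k then α else 0)
      + ∑ j : Fin k, (-1 : ℂ) ^ s j * Sval s z α {j}
    = ∑ I ∈ Finset.univ.filter (fun I : Finset (Fin k) => 2 ≤ I.card),
        (-1 : ℂ) ^ I.card *
          ∑ J ∈ I.powerset, (-1 : ℂ) ^ (∑ j ∈ J, s j) * Sval s z α J := by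
  have : NeZero k := ⟨by omega⟩
  rw [sum_two_le_card_neg_one_pow_card_mul_sum_powerset
      (fun J => (-1 : ℂ) ^ (∑ j ∈ J, s j) * Sval s z α J) (by simp [Sval_empty]),
    MTC_eq_Sval_univ]
  simp only [Fintype.card_fin, sum_singleton, pow_add]
  ring

theorem stmt12 (k : ℕ) (hk : 2 ≤ k) (s : Fin k → ℕ) (hs : ∀ j, 1 ≤ s j) (α : ℝ)
    (z : ℂ) (hz : 1 ≤ z.re) :
    (-1 : ℂ) ^ (k + ∑ j, s j) *
        MTC (fun j => (s j : ℂ)) z (fun i => if i = Fin.last k then α else 0)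
      + ∑ j : Fin k, (-1 : ℂ) ^ s j * Sval s z α {j}
    = ∑ I ∈ Finset.univ.filter (fun I : Finset (Fin k) => 2 ≤ I.card),
        (-1 : ℂ) ^ I.card *
          ∑ J ∈ I.powerset, (-1 : ℂ) ^ (∑ j ∈ J, s j) * Sval s z α J :=
  stmt12_general k hk s α z
end

section
/- For all positive integers a, b, c: ζ_MT(a,b,c) = Σ_{ν=0}^{b−1} C(a+ν−1, ν) ζ(c+a+ν, b−ν) + Σ_{ν=0}^{a−1} C(b+ν−1, ν) ζ(c+b+ν, a−ν), where C denotes the binomial coefficient. -/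
/-!
Splitting `1 / (x^a y^b)` repeatedly with `1 / (x y) = (1 / (x + y)) (1 / x + 1 / y)` gives the
partial fraction expansion
`1 / (x^a y^b) = ∑_{ν<b} C(a+ν-1, ν) / ((x+y)^(a+ν) y^(b-ν)) + ∑_{ν<a} C(b+ν-1, ν) / ((x+y)^(b+ν) x^(a-ν))`,
the binomial coefficients arising from Pascal's rule. Multiplying by `1 / (x+y)^c`, summing over
`x = m, y = n` and substituting `m + n ↦ m` turns every term into a depth-two multiple zeta value.
Each of these double series converges since its exponents are at least `2` and `1`, which
justifies summing term by term.
-/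

/-- The Mordell–Tornheim zeta value `ζ_MT(s₁,…,s_{k+1})` of depth `k`. -/
noncomputable def MTZ {k : ℕ} (s : Fin (k + 1) → ℕ) : ℝ :=
  ∑' m : Fin k → ℕ+,
    (∏ j : Fin k, ((m j : ℕ) : ℝ) ^ s j.castSucc)⁻¹ *
      ((∑ j : Fin k, ((m j : ℕ) : ℝ)) ^ s (Fin.last k))⁻¹

/-- The multiple zeta value `ζ(n₁,…,n_d)` (summed over `m₁ > m₂ > ⋯ > m_d ≥ 1`). -/
noncomputable def MZV {d : ℕ} (n : Fin d → ℕ) : ℝ :=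
  ∑' m : {m : Fin d → ℕ+ // ∀ i j : Fin d, i < j → m j < m i},
    (∏ i : Fin d, ((m.1 i : ℕ) : ℝ) ^ n i)⁻¹

open Finset

section PartialFraction

variable {K : Type*} [Field K]

/-- At `a = 0` the truncated `a + ν - 1` leaves only the `ν = 0` term, so that
`partialFractionSum c 0 b s y = (s ^ c * y ^ b)⁻¹` for `b ≥ 1`: this is the base case of the
expansion `inv_pow_mul_pow_mul_inv_add_pow`. -/
noncomputable def partialFractionSum (c a b : ℕ) (s y : K) : K :=
  ∑ ν ∈ range b, ((a + ν - 1).choose ν : K) * (s ^ (c + a + ν) * y ^ (b - ν))⁻¹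

@[simp]
lemma partialFractionSum_zero_right (c a : ℕ) (s y : K) : partialFractionSum c a 0 s y = 0 := by
  simp [partialFractionSum]

lemma partialFractionSum_zero_succ (c b : ℕ) (s y : K) :
    partialFractionSum c 0 (b + 1) s y = (s ^ c * y ^ (b + 1))⁻¹ := by
  rw [partialFractionSum, sum_range_succ']
  simp (disch := omega)

lemma partialFractionSum_succ_succ (c a b : ℕ) (s y : K) :
    partialFractionSum c (a + 1) (b + 1) s y
      = partialFractionSum (c + 1) a (b + 1) s y + partialFractionSum (c + 1) (a + 1) b s y := by
  simp only [partialFractionSum]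
  rw [sum_range_succ', sum_range_succ' _ b]
  conv_rhs => rw [add_right_comm, ← sum_add_distrib]
  congr 1
  · refine sum_congr rfl fun ν _ => ?_
    rw [show a + 1 + (ν + 1) - 1 = (a + ν) + 1 by omega, Nat.choose_succ_succ', Nat.cast_add,
      show a + (ν + 1) - 1 = a + ν by omega, show a + 1 + ν - 1 = a + ν by omega,
      show b + 1 - (ν + 1) = b - ν by omega]
    ring_nf
  · simp only [Nat.choose_zero_right]
    ring_nf

lemma inv_pow_mul_pow_mul_inv_add_pow {x y : K} (hx : x ≠ 0) (hy : y ≠ 0) (hxy : x + y ≠ 0) :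
    ∀ c a b : ℕ, a + b ≠ 0 → (x ^ a * y ^ b)⁻¹ * ((x + y) ^ c)⁻¹
      = partialFractionSum c a b (x + y) y + partialFractionSum c b a (x + y) x
  | _, 0, 0, h => absurd rfl h
  | c, a + 1, 0, _ => by simp [partialFractionSum_zero_succ, mul_comm]
  | c, 0, b + 1, _ => by simp [partialFractionSum_zero_succ, mul_comm]
  | c, a + 1, b + 1, _ => by
    have hsplit : (x ^ (a + 1) * y ^ (b + 1))⁻¹ * ((x + y) ^ c)⁻¹
        = (x ^ a * y ^ (b + 1))⁻¹ * ((x + y) ^ (c + 1))⁻¹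
          + (x ^ (a + 1) * y ^ b)⁻¹ * ((x + y) ^ (c + 1))⁻¹ := by
      field_simp
      ring
    rw [hsplit, inv_pow_mul_pow_mul_inv_add_pow hx hy hxy (c + 1) a (b + 1) (by omega),
      inv_pow_mul_pow_mul_inv_add_pow hx hy hxy (c + 1) (a + 1) b (by omega),
      partialFractionSum_succ_succ, partialFractionSum_succ_succ]
    ring

end PartialFraction

lemma rpow_three_halves_mul_le {m n : ℝ} {p q : ℕ} (hm : 1 ≤ m) (hn : 1 ≤ n) (hp : 2 ≤ p)
    (hq : 1 ≤ q) : m ^ (3 / 2 : ℝ) * n ^ (3 / 2 : ℝ) ≤ (m + n) ^ p * n ^ q := by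
  have hsq : ∀ r : ℝ, 0 ≤ r → (r ^ (3 / 2 : ℝ)) ^ 2 = r ^ 3 := fun r hr => by
    rw [← Real.rpow_natCast, ← Real.rpow_mul hr]
    norm_num
  calc m ^ (3 / 2 : ℝ) * n ^ (3 / 2 : ℝ) ≤ (m + n) ^ 2 * n := by
        refine (pow_le_pow_iff_left₀ (by positivity) (by positivity) two_ne_zero).1 ?_
        rw [mul_pow, hsq m (by linarith), hsq n (by linarith)]
        calc m ^ 3 * n ^ 3 = (m ^ 3 * n) * n ^ 2 := by ring
          _ ≤ ((m + n) ^ 3 * (m + n)) * n ^ 2 := by gcongr <;> linarith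
          _ = ((m + n) ^ 2 * n) ^ 2 := by ring
    _ ≤ (m + n) ^ p * n ^ q := by
        gcongr
        · linarith
        · exact le_self_pow₀ hn (by omega)

noncomputable def mzvTwoTerm (p q : ℕ) (x : ℕ+ × ℕ+) : ℝ :=
  ((((x.1 : ℕ) : ℝ) + ((x.2 : ℕ) : ℝ)) ^ p * ((x.2 : ℕ) : ℝ) ^ q)⁻¹

lemma summable_mzvTwoTerm {p q : ℕ} (hp : 2 ≤ p) (hq : 1 ≤ q) : Summable (mzvTwoTerm p q) := by
  have h : Summable fun n : ℕ+ => (((n : ℕ) : ℝ) ^ (3 / 2 : ℝ))⁻¹ :=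
    (Real.summable_nat_rpow_inv.2 (by norm_num)).comp_injective PNat.coe_injective
  refine (h.mul_of_nonneg h (fun _ => by positivity) (fun _ => by positivity)).of_nonneg_of_le
    (fun x => by unfold mzvTwoTerm; positivity) fun x => ?_
  rw [← mul_inv]
  exact inv_anti₀ (by positivity)
    (rpow_three_halves_mul_le (Nat.one_le_cast.2 x.1.pos) (Nat.one_le_cast.2 x.2.pos) hp hq)

def pnatPairEquivStrictAnti :
    ℕ+ × ℕ+ ≃ {m : Fin 2 → ℕ+ // ∀ i j : Fin 2, i < j → m j < m i} where
  toFun p := ⟨![p.1 + p.2, p.2], by simp [Fin.forall_fin_two, PNat.lt_add_left]⟩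
  invFun m := (m.1 0 - m.1 1, m.1 1)
  left_inv p := by simp
  right_inv m := Subtype.ext <| funext <| Fin.forall_fin_two.2
    ⟨PNat.sub_add_of_lt (m.2 0 1 Fin.zero_lt_one), rfl⟩

lemma MZV_two_eq_tsum (p q : ℕ) : MZV (d := 2) ![p, q] = ∑' x, mzvTwoTerm p q x := by
  rw [MZV, ← pnatPairEquivStrictAnti.tsum_eq]
  simp [pnatPairEquivStrictAnti, mzvTwoTerm]

lemma MTZ_two_eq_tsum (a b c : ℕ) :
    MTZ (k := 2) ![a, b, c]
      = ∑' x : ℕ+ × ℕ+, (((x.1 : ℕ) : ℝ) ^ a * ((x.2 : ℕ) : ℝ) ^ b)⁻¹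
          * ((((x.1 : ℕ) : ℝ) + ((x.2 : ℕ) : ℝ)) ^ c)⁻¹ := by
  rw [MTZ, ← (finTwoArrowEquiv ℕ+).symm.tsum_eq]
  simp [Fin.last]

theorem stmt13 (a b c : ℕ) (ha : 1 ≤ a) (hb : 1 ≤ b) (hc : 1 ≤ c) :
    MTZ (k := 2) ![a, b, c]
      = ∑ ν ∈ Finset.range b, ((a + ν - 1).choose ν : ℝ) * MZV (d := 2) ![c + a + ν, b - ν]
        + ∑ ν ∈ Finset.range a, ((b + ν - 1).choose ν : ℝ) * MZV (d := 2) ![c + b + ν, a - ν] := by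
  have hterm : ∀ x : ℕ+ × ℕ+, (((x.1 : ℕ) : ℝ) ^ a * ((x.2 : ℕ) : ℝ) ^ b)⁻¹
        * ((((x.1 : ℕ) : ℝ) + ((x.2 : ℕ) : ℝ)) ^ c)⁻¹
      = ∑ ν ∈ range b, ((a + ν - 1).choose ν : ℝ) * mzvTwoTerm (c + a + ν) (b - ν) x
        + ∑ ν ∈ range a, ((b + ν - 1).choose ν : ℝ) * mzvTwoTerm (c + b + ν) (a - ν) x.swap :=
    fun x => by
      rw [inv_pow_mul_pow_mul_inv_add_pow (by simp) (by simp) (by positivity) c a b (by omega)]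
      simp [partialFractionSum, mzvTwoTerm, add_comm ((x.2 : ℕ) : ℝ)]
  have hsummable {n m : ℕ} (hn : 1 ≤ n) (ν : ℕ) (hν : ν ∈ range m) :
      Summable (mzvTwoTerm (c + n + ν) (m - ν)) :=
    summable_mzvTwoTerm (by omega) (by simp at hν; omega)
  have h₁ : ∀ ν ∈ range b, Summable fun x : ℕ+ × ℕ+ =>
      ((a + ν - 1).choose ν : ℝ) * mzvTwoTerm (c + a + ν) (b - ν) x :=
    fun ν hν => (hsummable ha ν hν).mul_left _
  have h₂ : ∀ ν ∈ range a, Summable fun x : ℕ+ × ℕ+ =>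
      ((b + ν - 1).choose ν : ℝ) * mzvTwoTerm (c + b + ν) (a - ν) x.swap :=
    fun ν hν => ((hsummable hb ν hν).comp_injective Prod.swap_injective).mul_left _
  rw [MTZ_two_eq_tsum, tsum_congr hterm, (summable_sum h₁).tsum_add (summable_sum h₂),
    Summable.tsum_finsetSum h₁, Summable.tsum_finsetSum h₂]
  congr 1 <;> refine sum_congr rfl fun ν _ => ?_
  · rw [tsum_mul_left, MZV_two_eq_tsum]
  · rw [tsum_mul_left, MZV_two_eq_tsum, ← (Equiv.prodComm ℕ+ ℕ+).tsum_eq]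
    rfl
end

section
/- Let k ≥ 1, let s_1,…,s_k be positive integers, let s_{k+1} ∈ ℂ with Re(s_{k+1}) ≥ 1, and let I be a nonempty subset of {1,…,k}. Then the family (m_1,…,m_{k+1}) ↦ 1/(m_1^{s_1} ⋯ m_k^{s_k} m_{k+1}^{s_{k+1}}), indexed by tuples of positive integers (m_1,…,m_{k+1}) satisfying Σ_{j∈I} m_j = Σ_{j∈{1,…,k+1}∖I} m_j, is absolutely summable, i.e., the series Σ 1/(m_1^{s_1} ⋯ m_k^{s_k} m_{k+1}^{Re(s_{k+1})}) over this index set converges. -/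
/-!
Since `s_j ≥ 1` and `Re z ≥ 1`, each term is at most `∏ j, 1 / m_j`, a sum over tuples
`m ∈ ℕ+^(k+1)` satisfying a balance condition `∑_{j ∈ A} m_j = ∑_{j ∉ A} m_j`. Such a tuple is
determined by the position `p` of a largest coordinate together with the other `k` coordinates.
Since `m_p ≥ m_j` for all `j`, we get `m_p ≥ (∏_{j ≠ p} m_j)^(1/k)`, hence
`∏_j 1 / m_j ≤ ∏_{j ≠ p} m_j^(-(1 + 1/k))`, and the right side is summable as a product of
convergent `p`-series.
-/

open Finset

theorem summable_prod_pi_of_nonneg {ι β : Type*} [Fintype ι] {f : ι → β → ℝ}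
    (hf₀ : ∀ i b, 0 ≤ f i b) (hf : ∀ i, Summable (f i)) :
    Summable fun n : ι → β => ∏ i, f i (n i) := by
  have key := @Fintype.induction_empty_option (fun α (_ : Fintype α) => ∀ f : α → β → ℝ,
    (∀ i b, 0 ≤ f i b) → (∀ i, Summable (f i)) → Summable fun n : α → β => ∏ i, f i (n i))
    ?_ ?_ ?_
  · exact key ι f hf₀ hf
  · intro α γ _ e ih f hf₀ hf
    refine ((ih _ (fun i => hf₀ (e i)) (fun i => hf (e i))).comp_injective
      (Equiv.piCongrLeft' (fun _ => β) e.symm).injective).congr fun n => ?_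
    simp only [Function.comp_apply, Equiv.piCongrLeft'_apply, Equiv.symm_symm]
    -- the induction principle equips `α` with the instance transported along `e`
    let _ := Fintype.ofEquiv _ e.symm
    exact Fintype.prod_equiv e _ _ fun _ => rfl
  · exact fun _ _ _ => summable_of_hasFiniteSupport (Set.toFinite _)
  · intro α _ ih f hf₀ hf
    refine (((hf none).mul_of_nonneg (ih _ (fun i => hf₀ (some i)) (fun i => hf (some i)))
      (hf₀ none) fun n => prod_nonneg fun i _ => hf₀ _ _).comp_injective
      (Equiv.piOptionEquivProd (β := fun _ => β)).injective).congr fun n => ?_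
    exact (Fintype.prod_option fun i => f i (n i)).symm

theorem prod_rpow_one_add_inv_card_le {ι : Type*} {s : Finset ι} {x : ι → ℝ} {a : ℝ}
    (hs : s.Nonempty) (hx : ∀ j ∈ s, 0 ≤ x j) (hxa : ∀ j ∈ s, x j ≤ a) :
    (∏ j ∈ s, x j) ^ (1 + (#s : ℝ)⁻¹) ≤ a * ∏ j ∈ s, x j := by
  have hP : 0 ≤ ∏ j ∈ s, x j := prod_nonneg hx
  have ha : 0 ≤ a := (hx _ hs.choose_spec).trans (hxa _ hs.choose_spec)
  have hroot : (∏ j ∈ s, x j) ^ (#s : ℝ)⁻¹ ≤ a := by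
    calc (∏ j ∈ s, x j) ^ (#s : ℝ)⁻¹ ≤ (a ^ #s) ^ (#s : ℝ)⁻¹ :=
          Real.rpow_le_rpow hP ((prod_le_prod hx hxa).trans_eq (prod_const a)) (by positivity)
      _ = a := Real.pow_rpow_inv_natCast ha hs.card_pos.ne'
  calc (∏ j ∈ s, x j) ^ (1 + (#s : ℝ)⁻¹)
      = (∏ j ∈ s, x j) * (∏ j ∈ s, x j) ^ (#s : ℝ)⁻¹ := by
        rw [Real.rpow_add' hP (by positivity), Real.rpow_one]
    _ ≤ (∏ j ∈ s, x j) * a := by gcongr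
    _ = a * ∏ j ∈ s, x j := mul_comm _ _

theorem inv_prod_le_prod_update_rpow {ι : Type*} [Fintype ι] [DecidableEq ι] {x : ι → ℝ} {p : ι}
    (hι : 1 < Fintype.card ι) (hx : ∀ j, 0 < x j) (hp : ∀ j, x j ≤ x p) :
    (∏ j, x j)⁻¹ ≤ ∏ j, Function.update x p 1 j ^ (-(1 + ((Fintype.card ι - 1 : ℕ) : ℝ)⁻¹)) := by
  have hcard : #(univ.erase p) = Fintype.card ι - 1 := by
    rw [card_erase_of_mem (mem_univ p), card_univ]
  have hne : (univ.erase p).Nonempty := by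
    rw [← card_pos, hcard]; omega
  rw [← mul_prod_erase univ _ (mem_univ p), ← mul_prod_erase univ _ (mem_univ p),
    Function.update_self, Real.one_rpow, one_mul]
  have hP : 0 < ∏ j ∈ univ.erase p, x j := prod_pos fun j _ => hx j
  calc (x p * ∏ j ∈ univ.erase p, x j)⁻¹
      ≤ ((∏ j ∈ univ.erase p, x j) ^ (1 + (#(univ.erase p) : ℝ)⁻¹))⁻¹ :=
        inv_anti₀ (by positivity)
          (prod_rpow_one_add_inv_card_le hne (fun j _ => (hx j).le) fun j _ => hp j)
    _ = ∏ j ∈ univ.erase p, x j ^ (-(1 + (#(univ.erase p) : ℝ)⁻¹)) := by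
        rw [Real.finsetProd_rpow _ _ (fun j _ => (hx j).le), Real.rpow_neg hP.le]
    _ = _ := by
        rw [hcard]
        exact prod_congr rfl fun j hj => by rw [Function.update_of_ne (ne_of_mem_erase hj)]

theorem apply_eq_of_sum_eq_sum {ι : Type*} [DecidableEq ι] {A B : Finset ι} {m m' : ι → ℕ}
    {p : ι} (hpA : p ∈ A) (hpB : p ∉ B) (hm : ∑ j ∈ A, m j = ∑ j ∈ B, m j)
    (hm' : ∑ j ∈ A, m' j = ∑ j ∈ B, m' j) (h : ∀ j ≠ p, m j = m' j) : m p = m' p := by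
  have hB : ∑ j ∈ B, m j = ∑ j ∈ B, m' j :=
    sum_congr rfl fun j hj => h j (ne_of_mem_of_not_mem hj hpB)
  have hA : ∑ j ∈ A.erase p, m j = ∑ j ∈ A.erase p, m' j :=
    sum_congr rfl fun j hj => h j (ne_of_mem_erase hj)
  rw [← add_sum_erase A m hpA, hA, hB] at hm
  rw [← add_sum_erase A m' hpA] at hm'
  omega

def IsBalanced {ι : Type*} [Fintype ι] [DecidableEq ι] (A : Finset ι) (m : ι → ℕ+) : Prop :=
  ∑ j ∈ A, (m j : ℕ) = ∑ j ∈ Aᶜ, (m j : ℕ)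

theorem IsBalanced.eq_of_update_eq_update {ι : Type*} [Fintype ι] [DecidableEq ι]
    {A : Finset ι} {m m' : ι → ℕ+} (hm : IsBalanced A m) (hm' : IsBalanced A m') {p : ι}
    {a : ℕ+} (h : Function.update m p a = Function.update m' p a) : m = m' := by
  have hne : ∀ j ≠ p, (m j : ℕ) = m' j := fun j hj => by
    simpa only [Function.update_of_ne hj] using congrArg (fun n => (n j : ℕ)) h
  funext j
  rcases eq_or_ne j p with rfl | hj
  · refine PNat.coe_injective ?_
    by_cases hjA : j ∈ A
    · exact apply_eq_of_sum_eq_sum hjA (notMem_compl.2 hjA) hm hm' hne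
    · exact apply_eq_of_sum_eq_sum (mem_compl.2 hjA) hjA (Eq.symm hm) (Eq.symm hm') hne
  · exact PNat.coe_injective (hne j hj)

theorem summable_inv_prod_isBalanced {ι : Type*} [Fintype ι] [DecidableEq ι]
    (hι : 1 < Fintype.card ι) (A : Finset ι) :
    Summable fun m : {m : ι → ℕ+ // IsBalanced A m} => (∏ j, ((m.1 j : ℕ) : ℝ))⁻¹ := by
  have : Nonempty ι := Fintype.card_pos_iff.1 (by omega)
  set r : ℝ := 1 + ((Fintype.card ι - 1 : ℕ) : ℝ)⁻¹
  have hr : 1 < r := lt_add_of_pos_right 1 (inv_pos.2 (Nat.cast_pos.2 (by omega)))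
  choose p hp using fun m : ι → ℕ+ => Finite.exists_max m
  have hg : Summable fun x : ι × (ι → ℕ+) => ∏ j, ((x.2 j : ℕ) : ℝ) ^ (-r) := by
    have h1 : Summable fun n : ℕ+ => ((n : ℕ) : ℝ) ^ (-r) :=
      (Real.summable_nat_rpow.2 (by linarith)).comp_injective PNat.coe_injective
    have h2 := summable_prod_pi_of_nonneg (fun _ _ => by positivity) fun (_ : ι) => h1
    exact (summable_prod_of_nonneg fun x => by positivity).2 ⟨fun _ => h2, Summable.of_finite⟩
  have hΨ : Function.Injective fun m : {m : ι → ℕ+ // IsBalanced A m} =>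
      (p m.1, Function.update m.1 (p m.1) 1) := by
    rintro ⟨m, hm⟩ ⟨m', hm'⟩ h
    obtain ⟨hpm, hupd⟩ := Prod.ext_iff.1 h
    dsimp only at hpm hupd
    rw [hpm] at hupd
    exact Subtype.ext (hm.eq_of_update_eq_update hm' hupd)
  refine Summable.of_nonneg_of_le (fun m => by positivity) (fun m => ?_) (hg.comp_injective hΨ)
  refine (inv_prod_le_prod_update_rpow hι (x := fun j => ((m.1 j : ℕ) : ℝ)) (p := p m.1)
    (fun j => by positivity) (fun j => by exact_mod_cast hp m.1 j)).trans_eq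
    (prod_congr rfl fun j _ => ?_)
  dsimp only
  rw [Function.apply_update (fun _ (n : ℕ+) => ((n : ℕ) : ℝ)), PNat.one_coe, Nat.cast_one]

theorem isBalanced_map_castSucc {k : ℕ} {I : Finset (Fin k)} {m : Fin (k + 1) → ℕ+}
    (h : ∑ j ∈ I, (m j.castSucc : ℕ) = ∑ j ∈ Iᶜ, (m j.castSucc : ℕ) + m (Fin.last k)) :
    IsBalanced (I.map Fin.castSuccEmb) m := by
  have htot := sum_add_sum_compl (I.map Fin.castSuccEmb) fun j => (m j : ℕ)
  rw [sum_map, Fin.sum_univ_castSucc, ← sum_add_sum_compl I] at htot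
  rw [IsBalanced, sum_map]
  simp only [Fin.coe_castSuccEmb] at htot ⊢
  omega

theorem inv_prod_pow_mul_inv_rpow_le {k : ℕ} {x : Fin (k + 1) → ℝ} (hx : ∀ j, 1 ≤ x j)
    {s : Fin k → ℕ} (hs : ∀ j, 1 ≤ s j) {t : ℝ} (ht : 1 ≤ t) :
    (∏ j : Fin k, x j.castSucc ^ s j)⁻¹ * (x (Fin.last k) ^ t)⁻¹ ≤ (∏ j, x j)⁻¹ := by
  have hx₀ : ∀ j, 0 < x j := fun j => one_pos.trans_le (hx j)
  have hprod : ∏ j : Fin k, x j.castSucc ≤ ∏ j : Fin k, x j.castSucc ^ s j :=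
    prod_le_prod (fun j _ => (hx₀ _).le) fun j _ =>
      le_self_pow₀ (hx _) (Nat.one_le_iff_ne_zero.1 (hs j))
  have hlast : x (Fin.last k) ≤ x (Fin.last k) ^ t := Real.self_le_rpow_of_one_le (hx _) ht
  rw [Fin.prod_univ_castSucc, mul_inv]
  exact mul_le_mul (inv_anti₀ (prod_pos fun j _ => hx₀ _) hprod) (inv_anti₀ (hx₀ _) hlast)
    (inv_nonneg.2 (Real.rpow_nonneg (hx₀ _).le t))
    (inv_nonneg.2 (prod_nonneg fun j _ => (hx₀ _).le))

theorem stmt19_general (k : ℕ) (hk : 1 ≤ k) (s : Fin k → ℕ) (hs : ∀ j, 1 ≤ s j)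
    (z : ℂ) (hz : 1 ≤ z.re) (I : Finset (Fin k)) :
    Summable (fun m : {m : Fin (k + 1) → ℕ+ //
        ∑ j ∈ I, (m j.castSucc : ℕ)
          = (∑ j ∈ Iᶜ, (m j.castSucc : ℕ)) + (m (Fin.last k) : ℕ)} =>
      (∏ j : Fin k, ((m.1 j.castSucc : ℕ) : ℝ) ^ s j)⁻¹ *
        (((m.1 (Fin.last k) : ℕ) : ℝ) ^ z.re)⁻¹) := by
  have hbal := summable_inv_prod_isBalanced (ι := Fin (k + 1))
    (by rw [Fintype.card_fin]; omega) (I.map Fin.castSuccEmb)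
  have hinj : Function.Injective fun m : {m : Fin (k + 1) → ℕ+ //
      ∑ j ∈ I, (m j.castSucc : ℕ) = (∑ j ∈ Iᶜ, (m j.castSucc : ℕ)) + (m (Fin.last k) : ℕ)} =>
      (⟨m.1, isBalanced_map_castSucc m.2⟩ : {m // IsBalanced (I.map Fin.castSuccEmb) m}) :=
    fun _ _ h => Subtype.ext (congrArg Subtype.val h :)
  refine Summable.of_nonneg_of_le (fun m => by positivity) (fun m => ?_) (hbal.comp_injective hinj)
  exact inv_prod_pow_mul_inv_rpow_le (x := fun j => ((m.1 j : ℕ) : ℝ))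
    (fun j => by exact_mod_cast (m.1 j).pos) hs hz

theorem stmt19 (k : ℕ) (hk : 1 ≤ k) (s : Fin k → ℕ) (hs : ∀ j, 1 ≤ s j)
    (z : ℂ) (hz : 1 ≤ z.re) (I : Finset (Fin k)) (hI : I.Nonempty) :
    Summable (fun m : {m : Fin (k + 1) → ℕ+ //
        ∑ j ∈ I, (m j.castSucc : ℕ)
          = (∑ j ∈ Iᶜ, (m j.castSucc : ℕ)) + (m (Fin.last k) : ℕ)} =>
      (∏ j : Fin k, ((m.1 j.castSucc : ℕ) : ℝ) ^ s j)⁻¹ *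
        (((m.1 (Fin.last k) : ℕ) : ℝ) ^ z.re)⁻¹) :=
  stmt19_general k hk s hs z hz I
end
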